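/- (Menelaus' theorem for translation triangles in Nil.) Let A₀, A₁, A₂ ∈ ℝ³ be points of Nil whose fibre projections π(A₀), π(A₁), π(A₂) are affinely independent in ℝ². For (i,j) ∈ {(0,1),(1,2),(2,0)} let γ_{ij} be the Nil translation curve with γ_{ij}(0) = A_i and γ_{ij}(1) = A_j. Let P = γ₀₁(p), Q = γ₁₂(q), R = γ₂₀(r) with p, q, r ∉ {0, 1}. If π(P), π(Q), π(R) lie on a common Euclidean line in ℝ² which does not pass through any of π(A₀), π(A₁), π(A₂), then the Nil simple ratios satisfy (p/(1−p)) · (q/(1−q)) · (r/(1−r)) = −1. -/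

import Mathlib

/-!
The fibre projection maps each Nil translation curve `γ` from `A` to `B` to the affine
parametrisation `t ↦ (1 - t) π(A) + t π(B)` of a planar line, so the statement is planar
Menelaus. If `φ` is an affine equation of the transversal, then `φ(π(γ(t))) = 0` reads
`(1 - t) φ(π A) + t φ(π B) = 0`, i.e. `t / (1 - t) = -φ(π A) / φ(π B)`, and the product of
the three ratios telescopes to `-1`.
-/

/-- The Nil translation curve starting at `P = (p,q,r)` with direction `(u,v,w)`. -/
noncomputable def nilCurve (P d : ℝ × ℝ × ℝ) : ℝ → ℝ × ℝ × ℝ :=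
  fun t =>
    (P.1 + d.1 * t,
     P.2.1 + d.2.1 * t,
     P.2.2 + P.1 * d.2.1 * t + d.1 * d.2.1 * t ^ 2 / 2 + d.2.2 * t)

/-- The unique Nil translation curve `γ` with `γ(0) = A` and `γ(1) = B`. -/
noncomputable def nilCurveThrough (A B : ℝ × ℝ × ℝ) : ℝ → ℝ × ℝ × ℝ :=
  nilCurve A
    (B.1 - A.1, B.2.1 - A.2.1,
     B.2.2 - A.2.2 - A.1 * (B.2.1 - A.2.1) - (B.1 - A.1) * (B.2.1 - A.2.1) / 2)

/-- The fibre projection `π(a,b,c) = (a,b)`. -/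
def fibreProj : ℝ × ℝ × ℝ → ℝ × ℝ := fun q => (q.1, q.2.1)

def lineEquation (a b x : ℝ × ℝ) : ℝ :=
  (b.1 - a.1) * (x.2 - a.2) - (b.2 - a.2) * (x.1 - a.1)

theorem fibreProj_nilCurveThrough (A B : ℝ × ℝ × ℝ) (t : ℝ) :
    fibreProj (nilCurveThrough A B t) = AffineMap.lineMap (fibreProj A) (fibreProj B) t := by
  ext <;> simp [fibreProj, nilCurveThrough, nilCurve, AffineMap.lineMap_apply_module] <;> ring

theorem lineEquation_lineMap (a b x y : ℝ × ℝ) (t : ℝ) :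
    lineEquation a b (AffineMap.lineMap x y t) =
      AffineMap.lineMap (lineEquation a b x) (lineEquation a b y) t := by
  simp only [lineEquation, AffineMap.lineMap_apply_module, Prod.fst_add, Prod.snd_add,
    Prod.smul_fst, Prod.smul_snd, smul_eq_mul]
  ring

theorem mem_affineSpan_pair_iff_lineEquation_eq_zero {a b x : ℝ × ℝ} (hab : a ≠ b) :
    x ∈ affineSpan ℝ {a, b} ↔ lineEquation a b x = 0 := by
  rw [mem_affineSpan_pair_iff_exists_lineMap_eq]
  constructor
  · rintro ⟨t, rfl⟩
    rw [lineEquation_lineMap]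
    simp [lineEquation, mul_comm]
  · intro hx
    unfold lineEquation at hx
    set d₁ := b.1 - a.1
    set d₂ := b.2 - a.2
    have hd : d₁ ^ 2 + d₂ ^ 2 ≠ 0 := by
      intro h
      apply hab
      ext <;> nlinarith [sq_nonneg d₁, sq_nonneg d₂]
    -- orthogonal projection of `x - a` onto `b - a`
    refine ⟨((x.1 - a.1) * d₁ + (x.2 - a.2) * d₂) / (d₁ ^ 2 + d₂ ^ 2), ?_⟩
    ext <;> simp only [AffineMap.lineMap_apply_module', Prod.fst_add, Prod.snd_add,
      Prod.smul_fst, Prod.smul_snd, Prod.fst_sub, Prod.snd_sub, smul_eq_mul] <;> field_simp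
    · linear_combination d₂ * hx
    · linear_combination -d₁ * hx

theorem div_one_sub_eq_of_lineMap_eq_zero {K : Type*} [Field K] {x y t : K} (hy : y ≠ 0)
    (h : AffineMap.lineMap x y t = 0) : t / (1 - t) = -x / y := by
  rw [AffineMap.lineMap_apply_ring] at h
  have ht : 1 - t ≠ 0 := by
    intro ht
    obtain rfl : t = 1 := by linear_combination -ht
    exact hy (by simpa using h)
  rw [div_eq_div_iff ht hy]
  linear_combination h

theorem nil_menelaus_general
    (A₀ A₁ A₂ : ℝ × ℝ × ℝ)
    (p q r : ℝ)
    (P Q R : ℝ × ℝ × ℝ)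
    (hP : P = nilCurveThrough A₀ A₁ p)
    (hQ : Q = nilCurveThrough A₁ A₂ q)
    (hR : R = nilCurveThrough A₂ A₀ r)
    (a b : ℝ × ℝ) (hab : a ≠ b)
    (hPl : fibreProj P ∈ affineSpan ℝ {a, b})
    (hQl : fibreProj Q ∈ affineSpan ℝ {a, b})
    (hRl : fibreProj R ∈ affineSpan ℝ {a, b})
    (hA0 : fibreProj A₀ ∉ affineSpan ℝ {a, b})
    (hA1 : fibreProj A₁ ∉ affineSpan ℝ {a, b})
    (hA2 : fibreProj A₂ ∉ affineSpan ℝ {a, b}) :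
    (p / (1 - p)) * (q / (1 - q)) * (r / (1 - r)) = -1 := by
  simp only [mem_affineSpan_pair_iff_lineEquation_eq_zero hab, hP, hQ, hR,
    fibreProj_nilCurveThrough, lineEquation_lineMap] at hPl hQl hRl hA0 hA1 hA2
  rw [div_one_sub_eq_of_lineMap_eq_zero hA1 hPl, div_one_sub_eq_of_lineMap_eq_zero hA2 hQl,
    div_one_sub_eq_of_lineMap_eq_zero hA0 hRl]
  field_simp

/-- **Menelaus' theorem for translation triangles in Nil.**
If the fibre projections of the points `P`, `Q`, `R` on the sides of a Nil
translation triangle lie on a common Euclidean line avoiding the projections of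
the vertices, then the product of the three Nil simple ratios `p/(1−p)`,
`q/(1−q)`, `r/(1−r)` equals `−1`. -/
theorem nil_menelaus
    (A₀ A₁ A₂ : ℝ × ℝ × ℝ)
    (hind : AffineIndependent ℝ ![fibreProj A₀, fibreProj A₁, fibreProj A₂])
    (p q r : ℝ) (hp0 : p ≠ 0) (hp1 : p ≠ 1) (hq0 : q ≠ 0) (hq1 : q ≠ 1)
    (hr0 : r ≠ 0) (hr1 : r ≠ 1)
    (P Q R : ℝ × ℝ × ℝ)
    (hP : P = nilCurveThrough A₀ A₁ p)
    (hQ : Q = nilCurveThrough A₁ A₂ q)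
    (hR : R = nilCurveThrough A₂ A₀ r)
    (a b : ℝ × ℝ) (hab : a ≠ b)
    (hPl : fibreProj P ∈ affineSpan ℝ {a, b})
    (hQl : fibreProj Q ∈ affineSpan ℝ {a, b})
    (hRl : fibreProj R ∈ affineSpan ℝ {a, b})
    (hA0 : fibreProj A₀ ∉ affineSpan ℝ {a, b})
    (hA1 : fibreProj A₁ ∉ affineSpan ℝ {a, b})
    (hA2 : fibreProj A₂ ∉ affineSpan ℝ {a, b}) :
    (p / (1 - p)) * (q / (1 - q)) * (r / (1 - r)) = -1 :=
  nil_menelaus_general A₀ A₁ A₂ p q r P Q R hP hQ hR a b hab hPl hQl hRl hA0 hA1 hA2
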